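/- arXiv:1401.7391 — 2 statements merged into one kernel-verified Lean document; each statement's English description precedes it below -/
import Mathlib

section
/- Let 1 ≤ k ≤ n and define the cone 𝒫_k = {λ ∈ ℝⁿ : λ_{i_1} + ⋯ + λ_{i_k} > 0 for every choice of k distinct indices i_1 < ⋯ < i_k}, and P_k(λ) = ∏_{i_1 < ⋯ < i_k} (λ_{i_1} + ⋯ + λ_{i_k}). Then 𝒫_k is an open convex symmetric cone containing the positive cone Γ_n, and f = log P_k satisfies: ∂f/∂λ_i > 0 on 𝒫_k for all i, and f is concave on 𝒫_k. -/
/-!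
Every `k`-fold partial sum `λ ↦ ∑_{i ∈ s} λ_i` is a linear functional, so `𝒫_k` is a finite
intersection of open half-spaces, and on `𝒫_k` the function `log P_k` is the sum of the concave
functions `log ∑_{i ∈ s} λ_i`. Its `i`-th partial derivative is `∑_{s ∋ i} (∑_{j ∈ s} λ_j)⁻¹`,
a sum of positive terms which is nonempty since, for `1 ≤ k ≤ n`, some `k`-subset contains `i`.
-/

noncomputable section

/-- The cone `𝒫_k` of points all of whose `k`-fold partial sums are positive. -/
def Pcone (n k : ℕ) : Set (EuclideanSpace ℝ (Fin n)) :=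
  {x | ∀ s ∈ (Finset.univ : Finset (Fin n)).powersetCard k, 0 < ∑ i ∈ s, x i}

/-- `P_k(λ) = ∏_{i_1 < ⋯ < i_k} (λ_{i_1} + ⋯ + λ_{i_k})`. -/
def Pfun (n k : ℕ) (x : EuclideanSpace ℝ (Fin n)) : ℝ :=
  ∏ s ∈ (Finset.univ : Finset (Fin n)).powersetCard k, ∑ i ∈ s, x i

open Finset

theorem ConcaveOn.finset_sum {𝕜 E β ι : Type*} [Semiring 𝕜] [PartialOrder 𝕜] [AddCommMonoid E]
    [AddCommMonoid β] [PartialOrder β] [IsOrderedAddMonoid β] [SMul 𝕜 E] [Module 𝕜 β]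
    {s : Set E} {t : Finset ι} {f : ι → E → β} (hs : Convex 𝕜 s)
    (hf : ∀ i ∈ t, ConcaveOn 𝕜 s (f i)) :
    ConcaveOn 𝕜 s (fun x => ∑ i ∈ t, f i x) := by
  induction t using Finset.cons_induction with
  | empty => simpa using concaveOn_const (0 : β) hs
  | cons a t _ ih =>
    simp only [sum_cons]
    exact (hf a (mem_cons_self a t)).add (ih fun i hi => hf i (mem_cons_of_mem hi))

variable {n k : ℕ}

def partialSumCLM (s : Finset (Fin n)) : EuclideanSpace ℝ (Fin n) →L[ℝ] ℝ :=
  ∑ i ∈ s, EuclideanSpace.proj i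

@[simp]
theorem coe_partialSumCLM (s : Finset (Fin n)) :
    ⇑(partialSumCLM s) = fun x : EuclideanSpace ℝ (Fin n) => ∑ i ∈ s, x i := by
  ext x
  simp [partialSumCLM]

theorem partialSumCLM_single (s : Finset (Fin n)) (i : Fin n) :
    partialSumCLM s (EuclideanSpace.single i 1) = if i ∈ s then 1 else 0 := by
  simp

theorem Pcone_eq_biInter :
    Pcone n k = ⋂ s ∈ (univ : Finset (Fin n)).powersetCard k, {x | 0 < partialSumCLM s x} := by
  ext x
  simp [Pcone]

theorem isOpen_Pcone : IsOpen (Pcone n k) := by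
  rw [Pcone_eq_biInter]
  exact isOpen_biInter_finset fun s _ => isOpen_lt continuous_const (partialSumCLM s).continuous

theorem convex_Pcone : Convex ℝ (Pcone n k) := by
  rw [Pcone_eq_biInter]
  exact convex_iInter₂ fun s _ => convex_halfSpace_gt (partialSumCLM s).toLinearMap.isLinear 0

theorem smul_mem_Pcone {t : ℝ} (ht : 0 < t) {x : EuclideanSpace ℝ (Fin n)}
    (hx : x ∈ Pcone n k) : t • x ∈ Pcone n k := fun s hs => by
  simpa [← Finset.mul_sum] using mul_pos ht (hx s hs)

theorem perm_mem_Pcone {x : EuclideanSpace ℝ (Fin n)} (hx : x ∈ Pcone n k)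
    (σ : Equiv.Perm (Fin n)) :
    (WithLp.toLp 2 (fun i => x (σ i)) : EuclideanSpace ℝ (Fin n)) ∈ Pcone n k := fun s hs => by
  have hσs : s.map σ.toEmbedding ∈ (univ : Finset (Fin n)).powersetCard k := by
    simpa using hs
  simpa using hx _ hσs

theorem setOf_pos_subset_Pcone (hk : 1 ≤ k) :
    {x : EuclideanSpace ℝ (Fin n) | ∀ i, 0 < x i} ⊆ Pcone n k := fun x hx s hs => by
  rw [mem_powersetCard_univ] at hs
  exact sum_pos (fun i _ => hx i) (card_pos.mp (by omega))

theorem log_Pfun_eqOn :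
    Set.EqOn (fun y => Real.log (Pfun n k y))
      (fun y => ∑ s ∈ (univ : Finset (Fin n)).powersetCard k, Real.log (∑ i ∈ s, y i))
      (Pcone n k) :=
  fun _ hx => Real.log_prod fun s hs => (hx s hs).ne'

theorem hasFDerivAt_log_Pfun {x : EuclideanSpace ℝ (Fin n)} (hx : x ∈ Pcone n k) :
    HasFDerivAt (fun y => Real.log (Pfun n k y))
      (∑ s ∈ (univ : Finset (Fin n)).powersetCard k, (∑ j ∈ s, x j)⁻¹ • partialSumCLM s) x := by
  have hsum : HasFDerivAt
      (fun y => ∑ s ∈ (univ : Finset (Fin n)).powersetCard k, Real.log (∑ i ∈ s, y i))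
      (∑ s ∈ (univ : Finset (Fin n)).powersetCard k, (∑ j ∈ s, x j)⁻¹ • partialSumCLM s) x := by
    refine HasFDerivAt.fun_sum fun s hs => ?_
    have hlin := (partialSumCLM s).hasFDerivAt (x := x)
    rw [coe_partialSumCLM] at hlin
    exact (Real.hasDerivAt_log (hx s hs).ne').comp_hasFDerivAt x hlin
  exact hsum.congr_of_eventuallyEq <|
    Filter.eventuallyEq_of_mem (isOpen_Pcone.mem_nhds hx) log_Pfun_eqOn

theorem fderiv_log_Pfun_single_pos (hk1 : 1 ≤ k) (hkn : k ≤ n) {x : EuclideanSpace ℝ (Fin n)}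
    (hx : x ∈ Pcone n k) (i : Fin n) :
    0 < fderiv ℝ (fun y => Real.log (Pfun n k y)) x (EuclideanSpace.single i 1) := by
  obtain ⟨u, hiu, -, hu⟩ := exists_subsuperset_card_eq
    (subset_univ {i}) (by simpa using hk1) (by simpa using hkn)
  have hu : u ∈ (univ : Finset (Fin n)).powersetCard k := mem_powersetCard_univ.mpr hu
  rw [(hasFDerivAt_log_Pfun hx).fderiv, _root_.sum_apply]
  simp only [smul_apply, partialSumCLM_single, smul_eq_mul]
  refine sum_pos' (fun s hs => ?_) ⟨u, hu, ?_⟩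
  · split_ifs <;> simp [(hx s hs).le]
  · simpa [hiu (mem_singleton_self i)] using hx u hu

theorem concaveOn_log_partialSum (s : Finset (Fin n)) :
    ConcaveOn ℝ {x | 0 < ∑ i ∈ s, x i}
      (fun y : EuclideanSpace ℝ (Fin n) => Real.log (∑ i ∈ s, y i)) := by
  have h := strictConcaveOn_log_Ioi.concaveOn.comp_linearMap (partialSumCLM s).toLinearMap
  rw [ContinuousLinearMap.coe_coe, coe_partialSumCLM] at h
  exact h

theorem concaveOn_log_Pfun : ConcaveOn ℝ (Pcone n k) (fun y => Real.log (Pfun n k y)) := by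
  refine (ConcaveOn.finset_sum convex_Pcone fun s hs => ?_).congr log_Pfun_eqOn.symm
  exact (concaveOn_log_partialSum s).subset (fun _ hx => hx s hs) convex_Pcone

/-- `𝒫_k` is an open convex symmetric cone containing the positive
cone `Γ_n`, and `f = log P_k` has positive partial derivatives and is concave
on `𝒫_k`. -/
theorem Pcone_and_logPk_properties (n k : ℕ) (hk1 : 1 ≤ k) (hkn : k ≤ n) :
    IsOpen (Pcone n k) ∧
    Convex ℝ (Pcone n k) ∧
    (∀ (t : ℝ), 0 < t → ∀ x ∈ Pcone n k, t • x ∈ Pcone n k) ∧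
    (∀ x ∈ Pcone n k, ∀ σ : Equiv.Perm (Fin n),
      (WithLp.toLp 2 (fun i => x (σ i)) : EuclideanSpace ℝ (Fin n)) ∈ Pcone n k) ∧
    {x : EuclideanSpace ℝ (Fin n) | ∀ i, 0 < x i} ⊆ Pcone n k ∧
    (∀ x ∈ Pcone n k, ∀ i,
      0 < fderiv ℝ (fun y => Real.log (Pfun n k y)) x (EuclideanSpace.single i 1)) ∧
    ConcaveOn ℝ (Pcone n k) (fun y => Real.log (Pfun n k y)) :=
  ⟨isOpen_Pcone, convex_Pcone, fun _ ht _ hx => smul_mem_Pcone ht hx,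
    fun _ hx σ => perm_mem_Pcone hx σ, setOf_pos_subset_Pcone hk1,
    fun _ hx i => fderiv_log_Pfun_single_pos hk1 hkn hx i, concaveOn_log_Pfun⟩
end
end

section
/- Let f be smooth, symmetric, with f_i > 0, concave on Γ, and suppose μ, λ ∈ Γ satisfy f(μ) ≥ f(λ), with η a point on the open segment from μ to λ with f(η) = f(μ) and |η − μ| ≥ 2δ for some δ > 0, and suppose f(μ + δ|η−μ|^{-1}(η − μ)) ≥ f(μ) + θ for some θ > 0. Then ∑_i f_i(λ)(μ_i − λ_i) ≥ θ + f(μ) − f(λ). -/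
open scoped RealInnerProductSpace

noncomputable section

/-- Permutation of coordinates of a point in ℝⁿ. -/
def permute {n : ℕ} (x : EuclideanSpace ℝ (Fin n)) (σ : Equiv.Perm (Fin n)) :
    EuclideanSpace ℝ (Fin n) := WithLp.toLp 2 (fun i => x (σ i))

/-- The unit normal `ν_λ = Df(λ)/|Df(λ)|` to the level surface of `f` through `λ`. -/
def nu {n : ℕ} (f : EuclideanSpace ℝ (Fin n) → ℝ) (x : EuclideanSpace ℝ (Fin n)) :
    EuclideanSpace ℝ (Fin n) := ‖gradient f x‖⁻¹ • gradient f x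

/-- The level set `∂Γ^σ = {λ ∈ Γ : f(λ) = σ}`. -/
def levelSet {n : ℕ} (Γ : Set (EuclideanSpace ℝ (Fin n)))
    (f : EuclideanSpace ℝ (Fin n) → ℝ) (σ : ℝ) : Set (EuclideanSpace ℝ (Fin n)) :=
  {lam ∈ Γ | f lam = σ}

/-- `L^σ(μ)`: the set of points of `∂Γ^σ` minimizing `ν_μ · (λ − μ)`. -/
def minSet {n : ℕ} (Γ : Set (EuclideanSpace ℝ (Fin n)))
    (f : EuclideanSpace ℝ (Fin n) → ℝ) (σ : ℝ) (μ : EuclideanSpace ℝ (Fin n)) :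
    Set (EuclideanSpace ℝ (Fin n)) :=
  {ζ ∈ levelSet Γ f σ | ∀ lam ∈ levelSet Γ f σ, ⟪nu f μ, ζ - μ⟫ ≤ ⟪nu f μ, lam - μ⟫}

/-- `β_R(μ,σ) = sup{ν_μ · ν_λ : λ ∈ ∂Γ^σ, |λ| = R}`. -/
def beta {n : ℕ} (Γ : Set (EuclideanSpace ℝ (Fin n)))
    (f : EuclideanSpace ℝ (Fin n) → ℝ) (μ : EuclideanSpace ℝ (Fin n)) (σ R : ℝ) : ℝ :=
  sSup ((fun lam => ⟪nu f μ, nu f lam⟫) '' {lam ∈ levelSet Γ f σ | ‖lam‖ = R})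

theorem concave_grad_ineq {E : Type*} [NormedAddCommGroup E] [NormedSpace ℝ E]
    {s : Set E} {f : E → ℝ} (hf : ConcaveOn ℝ s f) {x y : E}
    (hx : x ∈ s) (hy : y ∈ s) (hd : DifferentiableAt ℝ f x) :
    f y ≤ f x + fderiv ℝ f x (y - x) := by
  set φ : ℝ → ℝ := fun t => f (x + t • (y - x)) with hφ
  have hder : HasDerivAt φ (fderiv ℝ f x (y - x)) 0 := by
    have h1 : HasDerivAt (fun t : ℝ => x + t • (y - x)) (y - x) 0 := by
      simpa using ((hasDerivAt_id (0:ℝ)).smul_const (y - x)).const_add x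
    have hl : HasFDerivAt f (fderiv ℝ f x) ((fun t : ℝ => x + t • (y - x)) 0) := by
      simpa using hd.hasFDerivAt
    exact hl.comp_hasDerivAt 0 h1
  have hslope : Filter.Tendsto (slope φ 0) (nhdsWithin 0 (Set.Ioi 0))
      (nhds (fderiv ℝ f x (y - x))) :=
    ((hasDerivAt_iff_tendsto_slope.mp hder).mono_left
      (nhdsWithin_mono _ (by intro t ht; exact ne_of_gt ht)))
  have hev : ∀ᶠ t in nhdsWithin 0 (Set.Ioi 0), f y - f x ≤ slope φ 0 t := by
    filter_upwards [Ioo_mem_nhdsGT_of_mem (Set.mem_Ico.mpr ⟨le_refl 0, zero_lt_one⟩)]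
      with t ht
    obtain ⟨ht0, ht1⟩ := ht
    have hconc := hf.2 hx hy (by linarith : (0:ℝ) ≤ 1 - t) (le_of_lt ht0) (by ring)
    have hpt : (1 - t) • x + t • y = x + t • (y - x) := by
      rw [smul_sub, sub_smul]; module
    rw [hpt] at hconc
    rw [slope_def_field]
    have h2 : t * (f y - f x) ≤ φ t - φ 0 := by
      simp only [φ, zero_smul, add_zero]
      simp only [smul_eq_mul] at hconc
      nlinarith
    rw [le_div_iff₀ (by simpa using ht0)]
    simpa [sub_zero, mul_comm] using h2
  have := ge_of_tendsto hslope hev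
  linarith

/-- chain of inequalities (gj-C30): if `η` lies on the open
segment from `μ` to `λ` with `f(η) = f(μ) ≥ f(λ)`, `|η − μ| ≥ 2δ` and
`f(μ + δ|η−μ|⁻¹(η − μ)) ≥ f(μ) + θ`, then
`∑ᵢ fᵢ(λ)(μᵢ − λᵢ) ≥ θ + f(μ) − f(λ)`. -/
theorem gjC30_chain_inequality {n : ℕ}
    (Γ : Set (EuclideanSpace ℝ (Fin n)))
    (f : EuclideanSpace ℝ (Fin n) → ℝ)
    (hΓopen : IsOpen Γ) (hΓconvex : Convex ℝ Γ)
    (hΓcone : ∀ (t : ℝ), 0 < t → ∀ x ∈ Γ, t • x ∈ Γ)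
    (hΓsym : ∀ x ∈ Γ, ∀ σ : Equiv.Perm (Fin n), permute x σ ∈ Γ)
    (hf : ContDiffOn ℝ (⊤ : ℕ∞) f Γ)
    (hfsym : ∀ x ∈ Γ, ∀ σ : Equiv.Perm (Fin n), f (permute x σ) = f x)
    (hfmono : ∀ x ∈ Γ, ∀ i, 0 < fderiv ℝ f x (EuclideanSpace.single i 1))
    (hfconc : ConcaveOn ℝ Γ f)
    (μ lam η : EuclideanSpace ℝ (Fin n)) (hμ : μ ∈ Γ) (hlam : lam ∈ Γ)
    (hle : f lam ≤ f μ)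
    (hη : ∃ t ∈ Set.Ioo (0 : ℝ) 1, η = t • μ + (1 - t) • lam)
    (hηf : f η = f μ)
    (δ θ : ℝ) (hδ : 0 < δ) (hθ : 0 < θ)
    (hηfar : 2 * δ ≤ ‖η - μ‖)
    (hstep : f μ + θ ≤ f (μ + (δ * ‖η - μ‖⁻¹) • (η - μ))) :
    θ + f μ - f lam ≤
      ∑ i, fderiv ℝ f lam (EuclideanSpace.single i 1) * (μ i - lam i) := by

  obtain ⟨t, ht, hηeq⟩ := hη
  have hημ : η - μ = (1 - t) • (lam - μ) := by rw [hηeq]; module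
  have hn : 0 < ‖η - μ‖ := by linarith
  set c : ℝ := δ * ‖η - μ‖⁻¹ with hc
  have hc0 : 0 < c := mul_pos hδ (inv_pos.mpr hn)
  have hcn : c * ‖η - μ‖ = δ := by rw [hc, mul_assoc, inv_mul_cancel₀ hn.ne', mul_one]
  have hchalf : c ≤ 1 / 2 := by nlinarith
  set a : ℝ := c * (1 - t) with ha
  have ha0 : 0 < a := mul_pos hc0 (by linarith [ht.2])
  have ha1 : a < 1 := by nlinarith [ht.1, ht.2]
  set ζ := μ + c • (η - μ) with hζ
  have hζeq : ζ = a • lam + (1 - a) • μ := by rw [hζ, hημ, ha]; module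
  have hζΓ : ζ ∈ Γ := hζeq ▸ hΓconvex hlam hμ ha0.le (by linarith) (by ring)
  have hd : DifferentiableAt ℝ f lam :=
    (hf.contDiffAt (hΓopen.mem_nhds hlam)).differentiableAt (by simp)
  have hgrad := concave_grad_ineq hfconc hlam hζΓ hd
  have hζsub : ζ - lam = (1 - a) • (μ - lam) := by rw [hζeq]; module
  rw [hζsub, map_smul, smul_eq_mul] at hgrad
  set D := fderiv ℝ f lam (μ - lam) with hD
  have hK : θ + f μ - f lam ≤ (1 - a) * D := by linarith
  have hD0 : 0 < D := by nlinarith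
  have hDge : θ + f μ - f lam ≤ D := by nlinarith [mul_nonneg ha0.le hD0.le]
  have hsum : μ - lam = ∑ i, (μ i - lam i) • EuclideanSpace.single i (1 : ℝ) := by
    ext j
    rw [WithLp.ofLp_sum, Finset.sum_apply]
    simp [EuclideanSpace.single_apply]
  have hDsum : D = ∑ i, fderiv ℝ f lam (EuclideanSpace.single i 1) * (μ i - lam i) := by
    rw [hD, hsum, map_sum]
    simp [map_smul, mul_comm]
  linarith [hDsum ▸ hDge]
end
end
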